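/- Let k be a field, A a finite-dimensional k-algebra, P a finitely generated projective left A-module, B := (End_A P)^op, and F := Hom_A(P, −), and assume condition (A1). If M is a finite-dimensional indecomposable A-module, then all composition factors of the B-module F(M) belong to the same block of B; equivalently, every central idempotent of B acts on F(M) either as zero or as the identity. -/

import Mathlib

/-!
Under (A1) the centre of `B` comes from the centre of `A`: a central `ε ∈ End_A P` induces a
`B`-linear endomorphism of `F(A)`, which by fullness is right multiplication by some `a ∈ A`,
and faithfulness forces `a` central and `ε = a • -`. So a central idempotent of `B` acts on
`F(M)` through the endomorphism `a • -` of `M`, which is invertible or nilpotent by Fitting's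
lemma since `M` is indecomposable; as the action is idempotent, it is `1` or `0`. Among the
central idempotents acting as `1` on `F(M)`, one with minimal image in `P` is primitive, and it
acts as the identity on every subquotient of `F(M)`.
-/

noncomputable section

section Defs

variable (R : Type) [Ring R]

/-- `L` is (a simple module which is) a composition factor of `M`,
i.e. `L` is simple and isomorphic to a subquotient of `M`. -/
def IsCompFactor (L M : Type) [AddCommGroup L] [Module R L]
    [AddCommGroup M] [Module R M] : Prop :=
  IsSimpleModule R L ∧
    ∃ N₁ N₂ : Submodule R M, N₁ ≤ N₂ ∧
      Nonempty ((↥N₂ ⧸ Submodule.comap N₂.subtype N₁) ≃ₗ[R] L)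

/-- `M` and `N` have a common composition factor. -/
def HaveCommonCompFactor (M N : Type) [AddCommGroup M] [Module R M]
    [AddCommGroup N] [Module R N] : Prop :=
  ∃ (M₁ M₂ : Submodule R M) (N₁ N₂ : Submodule R N), M₁ ≤ M₂ ∧ N₁ ≤ N₂ ∧
    IsSimpleModule R (↥M₂ ⧸ Submodule.comap M₂.subtype M₁) ∧
    Nonempty ((↥M₂ ⧸ Submodule.comap M₂.subtype M₁) ≃ₗ[R]
      (↥N₂ ⧸ Submodule.comap N₂.subtype N₁))

/-- Two members of a family of modules are linked if they are joined by a finite chain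
of members of the family in which consecutive members have a common composition factor. -/
def Linked {Λ : Type} (Mfam : Λ → Type) [∀ l, AddCommGroup (Mfam l)]
    [∀ l, Module R (Mfam l)] (a b : Λ) : Prop :=
  Relation.ReflTransGen (fun x y => HaveCommonCompFactor R (Mfam x) (Mfam y)) a b

/-- a primitive central idempotent (block idempotent) -/
def IsBlockIdempotent (e : R) : Prop :=
  e ≠ 0 ∧ IsIdempotentElem e ∧ e ∈ Subring.center R ∧
    ∀ f g : R, IsIdempotentElem f → IsIdempotentElem g →
      f ∈ Subring.center R → g ∈ Subring.center R →
      f * g = 0 → e = f + g → f = 0 ∨ g = 0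

/-- `M` and `N` belong to the same block: some primitive central idempotent acts as the
identity on both. -/
def InSameBlock (M N : Type) [AddCommGroup M] [Module R M]
    [AddCommGroup N] [Module R N] : Prop :=
  ∃ e : R, IsBlockIdempotent R e ∧ (∀ m : M, e • m = m) ∧ (∀ x : N, e • x = x)

/-- `π : Q → L` is a projective cover: `Q` projective, `π` surjective, `ker π` superfluous. -/
def IsProjectiveCover (Q L : Type) [AddCommGroup Q] [Module R Q]
    [AddCommGroup L] [Module R L] (π : Q →ₗ[R] L) : Prop :=
  Module.Projective R Q ∧ Function.Surjective π ∧
    ∀ N : Submodule R Q, N ⊔ LinearMap.ker π = ⊤ → N = ⊤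

/-- number of factors of a composition series isomorphic to `D` -/
def factorCount {M : Type} [AddCommGroup M] [Module R M]
    (s : CompositionSeries (Submodule R M)) (D : Type) [AddCommGroup D] [Module R D] : ℕ :=
  Nat.card {i : Fin s.length //
    Nonempty ((↥(s i.succ) ⧸ Submodule.comap (s i.succ).subtype (s i.castSucc)) ≃ₗ[R] D)}

end Defs

section Cover

variable (A : Type) [Ring A] (P : Type) [AddCommGroup P] [Module A P]

/-- the module structure on `F(M) = Hom_A(P, M)` over `B = (End_A P)ᵒᵖ`, by precomposition -/
instance endOppModule (M : Type) [AddCommGroup M] [Module A M] :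
    Module (Module.End A P)ᵐᵒᵖ (P →ₗ[A] M) where
  smul b f := f ∘ₗ b.unop
  one_smul f := LinearMap.comp_id f
  mul_smul b c f := rfl
  smul_zero b := LinearMap.zero_comp _
  smul_add b f g := LinearMap.add_comp _ _ _
  add_smul b c f := LinearMap.comp_add _ _ _
  zero_smul f := LinearMap.comp_zero f

/-- The `B`-module homomorphism `F(M) → F(N)` induced by an `A`-module homomorphism
`φ : M → N`, namely postcomposition with `φ`. -/
def inducedHom {M N : Type} [AddCommGroup M] [Module A M] [AddCommGroup N] [Module A N]
    (φ : M →ₗ[A] N) : (P →ₗ[A] M) →ₗ[(Module.End A P)ᵐᵒᵖ] (P →ₗ[A] N) where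
  toFun f := φ ∘ₗ f
  map_add' f g := LinearMap.comp_add _ _ _
  map_smul' b f := rfl

/-- Condition (A1): `F = Hom_A(P, -)` is fully faithful on finitely generated
projective `A`-modules. -/
def CondA1 : Prop :=
  ∀ (M : Type) [AddCommGroup M] [Module A M] [Module.Finite A M] [Module.Projective A M]
    (N : Type) [AddCommGroup N] [Module A N] [Module.Finite A N] [Module.Projective A N],
    Function.Bijective (fun φ : M →ₗ[A] N => inducedHom A P φ)

end Cover

section Endomorphisms

variable {R : Type} [Ring R] {M : Type} [AddCommGroup M] [Module R M]

theorem Module.End.isUnit_or_isNilpotent_of_indecomposable [IsNoetherian R M] [IsArtinian R M]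
    (hM : ∀ N₁ N₂ : Submodule R M, IsCompl N₁ N₂ → N₁ = ⊥ ∨ N₂ = ⊥)
    (f : Module.End R M) : IsUnit f ∨ IsNilpotent f := by
  obtain ⟨n, hn⟩ := Filter.eventually_atTop.mp f.eventually_isCompl_ker_pow_range_pow
  rcases hM _ _ (hn (n + 1) n.le_succ) with hker | hrange
  · left
    have hinj :=
      Module.End.injective_of_iterate_injective n.succ_ne_zero (LinearMap.ker_eq_bot.mp hker)
    exact (Module.End.isUnit_iff f).mpr (IsArtinian.bijective_of_injective_endomorphism f hinj)
  · exact Or.inr ⟨n + 1, LinearMap.range_eq_bot.mp hrange⟩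

theorem LinearMap.range_lt_range_add_of_orthogonal {φ γ : Module.End R M}
    (hφ : IsIdempotentElem φ) (hγ : IsIdempotentElem γ) (hφγ : φ * γ = 0)
    (hγφ : γ * φ = 0) (hφ0 : φ ≠ 0) :
    LinearMap.range γ < LinearMap.range (φ + γ) := by
  refine lt_of_le_not_ge ?_ fun hle => hφ0 (LinearMap.ext fun p => ?_)
  · rintro _ ⟨p, rfl⟩
    refine ⟨γ p, ?_⟩
    change (φ * γ) p + (γ * γ) p = γ p
    rw [hγ.eq, hφγ, LinearMap.zero_apply, zero_add]
  · obtain ⟨q, hq⟩ := hle ⟨φ p, by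
      change (φ * φ) p + (γ * φ) p = φ p
      rw [hφ.eq, hγφ, LinearMap.zero_apply, add_zero]⟩
    calc φ p = (φ * φ) p := by rw [hφ.eq]
      _ = (φ * γ) q := by rw [Module.End.mul_apply, ← hq, Module.End.mul_apply]
      _ = 0 := by rw [hφγ, LinearMap.zero_apply]

theorem LinearMap.range_unop_lt_range_unop_add {f g : (Module.End R M)ᵐᵒᵖ}
    (hf : IsIdempotentElem f) (hg : IsIdempotentElem g) (hfc : f ∈ Subring.center _)
    (hfg : f * g = 0) (hf0 : f ≠ 0) :
    LinearMap.range g.unop < LinearMap.range (f + g).unop :=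
  LinearMap.range_lt_range_add_of_orthogonal (congrArg MulOpposite.unop hf)
    (congrArg MulOpposite.unop hg)
    (by rw [← MulOpposite.unop_mul, Subring.mem_center_iff.mp hfc g, hfg, MulOpposite.unop_zero])
    (by rw [← MulOpposite.unop_mul, hfg, MulOpposite.unop_zero])
    ((MulOpposite.unop_ne_zero_iff f).mpr hf0)

end Endomorphisms

section Idempotents

variable {R : Type} [Ring R]

theorem exists_isBlockIdempotent_forall_smul_eq_self {X : Type} [AddCommGroup X] [Module R X]
    [Nontrivial X] {β : Type} [Preorder β] [WellFoundedLT β] (ρ : R → β)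
    (hρ : ∀ f g : R, IsIdempotentElem f → IsIdempotentElem g → f ∈ Subring.center R →
      f * g = 0 → f ≠ 0 → ρ g < ρ (f + g))
    (hX : ∀ e ∈ Subring.center R, IsIdempotentElem e →
      (∀ x : X, e • x = 0) ∨ ∀ x : X, e • x = x) :
    ∃ e : R, IsBlockIdempotent R e ∧ ∀ x : X, e • x = x := by
  let S : Set R := {c | c ∈ Subring.center R ∧ IsIdempotentElem c ∧ ∀ x : X, c • x = x}
  obtain ⟨c, ⟨hcc, hci, hcX⟩, hmin⟩ := (InvImage.wf ρ wellFounded_lt).has_min S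
    ⟨1, Subring.one_mem _, IsIdempotentElem.one, one_smul R⟩
  obtain ⟨x, hx⟩ := exists_ne (0 : X)
  refine ⟨c, ⟨fun h => hx ?_, hci, hcc, fun f g hfi hgi hfc hgc hfg hcfg => ?_⟩, hcX⟩
  · rw [← hcX x, h, zero_smul]
  have hsum : ∀ y : X, f • y + g • y = y := fun y => by rw [← add_smul, ← hcfg, hcX]
  rcases hX f hfc hfi with hf | hf <;> rcases hX g hgc hgi with hg | hg
  · exact absurd (by simpa [hf, hg] using (hsum x).symm) hx
  · by_contra! hne
    have hlt := hρ f g hfi hgi hfc hfg hne.1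
    rw [← hcfg] at hlt
    exact hmin g ⟨hgc, hgi, hg⟩ hlt
  · by_contra! hne
    have hgf : g * f = 0 := by rw [← Subring.mem_center_iff.mp hgc f, hfg]
    have hlt := hρ g f hgi hfi hgc hgf hne.2
    rw [add_comm, ← hcfg] at hlt
    exact hmin f ⟨hfc, hfi, hf⟩ hlt
  · exact absurd (by simpa [hf, hg] using hsum x) hx

end Idempotents

section CompFactor

variable {R : Type} [Ring R] {X D : Type} [AddCommGroup X] [Module R X] [AddCommGroup D]
  [Module R D]

theorem IsCompFactor.nontrivial (h : IsCompFactor R D X) : Nontrivial X := by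
  obtain ⟨hD, N₁, N₂, -, ⟨g⟩⟩ := h
  have := IsSimpleModule.nontrivial R D
  have := g.symm.injective.nontrivial
  have := (Submodule.Quotient.mk_surjective (Submodule.comap N₂.subtype N₁)).nontrivial
  exact (Subtype.val_injective (p := (· ∈ N₂))).nontrivial

theorem IsCompFactor.smul_eq_self (h : IsCompFactor R D X) {e : R} (he : ∀ x : X, e • x = x)
    (d : D) : e • d = d := by
  obtain ⟨-, N₁, N₂, -, ⟨g⟩⟩ := h
  obtain ⟨y, hy⟩ := Submodule.Quotient.mk_surjective _ (g.symm d)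
  rw [← g.apply_symm_apply d, ← map_smul, ← hy, ← Submodule.Quotient.mk_smul,
    show e • y = y from Subtype.ext (he y)]

end CompFactor

section Induced

variable (A : Type) [Ring A] (P : Type) [AddCommGroup P] [Module A P]

local notation "B" => (Module.End A P)ᵐᵒᵖ

def inducedRingHom (M : Type) [AddCommGroup M] [Module A M] :
    Module.End A M →+* Module.End B (P →ₗ[A] M) where
  toFun := inducedHom A P
  map_one' := rfl
  map_mul' _ _ := rfl
  map_zero' := LinearMap.ext fun _ => LinearMap.zero_comp _
  map_add' _ _ := LinearMap.ext fun _ => LinearMap.add_comp _ _ _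

def precompOfMemCenter {ε : Module.End A P} (hε : ε ∈ Set.center (Module.End A P))
    (X : Type) [AddCommGroup X] [Module A X] : Module.End B (P →ₗ[A] X) where
  toFun f := f ∘ₗ ε
  map_add' f g := LinearMap.add_comp _ _ _
  map_smul' b f := by
    show (f ∘ₗ b.unop) ∘ₗ ε = (f ∘ₗ ε) ∘ₗ b.unop
    rw [LinearMap.comp_assoc, LinearMap.comp_assoc, ← Module.End.mul_eq_comp,
      ← Module.End.mul_eq_comp, (Set.mem_center_iff.mp hε).comm]

variable {A P}

theorem CondA1.comp_eq_comp_of_lift (hA1 : CondA1 A P) {ε : Module.End A P}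
    {X Y : Type} [AddCommGroup X] [Module A X] [Module.Finite A X] [Module.Projective A X]
    [AddCommGroup Y] [Module A Y] [Module.Finite A Y] [Module.Projective A Y]
    {φX : Module.End A X} {φY : Module.End A Y}
    (hX : ∀ f : P →ₗ[A] X, φX ∘ₗ f = f ∘ₗ ε)
    (hY : ∀ f : P →ₗ[A] Y, φY ∘ₗ f = f ∘ₗ ε)
    (χ : X →ₗ[A] Y) :
    χ ∘ₗ φX = φY ∘ₗ χ :=
  (hA1 X Y).1 <| LinearMap.ext fun f => by
    change χ ∘ₗ φX ∘ₗ f = φY ∘ₗ χ ∘ₗ f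
    rw [hX, hY, LinearMap.comp_assoc]

variable [Module.Finite A P] [Module.Projective A P]

theorem CondA1.exists_mem_center_apply_eq_smul (hA1 : CondA1 A P) {ε : Module.End A P}
    (hε : ε ∈ Set.center (Module.End A P)) :
    ∃ a ∈ Set.center A, ∀ p : P, ε p = a • p := by
  obtain ⟨φ, hφ⟩ := (hA1 A A).2 (precompOfMemCenter A P hε A)
  have hφA : ∀ f : P →ₗ[A] A, φ ∘ₗ f = f ∘ₗ ε := fun f => LinearMap.congr_fun hφ f
  have hεP : ∀ f : P →ₗ[A] P, ε ∘ₗ f = f ∘ₗ ε := (Set.mem_center_iff.mp hε).comm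
  have hφ_apply : ∀ c : A, φ c = c * φ 1 := fun c => by
    rw [← smul_eq_mul, ← map_smul, smul_eq_mul, mul_one]
  refine ⟨φ 1, Semigroup.mem_center_iff.mpr fun c => ?_, fun p => ?_⟩
  · have := LinearMap.congr_fun
      (hA1.comp_eq_comp_of_lift hφA hφA (LinearMap.toSpanSingleton A A c)) 1
    simpa [hφ_apply c] using this.symm
  · have := LinearMap.congr_fun
      (hA1.comp_eq_comp_of_lift hφA hεP (LinearMap.toSpanSingleton A P p)) 1
    simpa using this.symm

theorem CondA1.smul_eq_zero_or_eq_self (hA1 : CondA1 A P) {M : Type} [AddCommGroup M]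
    [Module A M] [IsNoetherian A M] [IsArtinian A M]
    (hM : ∀ N₁ N₂ : Submodule A M, IsCompl N₁ N₂ → N₁ = ⊥ ∨ N₂ = ⊥) {e : B}
    (he : e ∈ Subring.center B) (hei : IsIdempotentElem e) :
    (∀ f : P →ₗ[A] M, e • f = 0) ∨ ∀ f : P →ₗ[A] M, e • f = f := by
  obtain ⟨a, ha, hεa⟩ :=
    hA1.exists_mem_center_apply_eq_smul (MulOpposite.unop_mem_center_iff.mpr he)
  let μ : Module.End A M := Module.End.smulLeft a ha
  let T := inducedRingHom A P M μ
  have hT : ∀ f : P →ₗ[A] M, T f = e • f := fun f => LinearMap.ext fun p => by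
    change a • f p = f (e.unop p)
    rw [hεa, map_smul]
  have hTi : IsIdempotentElem T := LinearMap.ext fun f => by
    change T (T f) = T f
    rw [hT, hT, ← mul_smul, hei.eq]
  rcases μ.isUnit_or_isNilpotent_of_indecomposable hM with hμ | hμ
  · have hT1 : T = 1 := (IsIdempotentElem.iff_eq_one_of_isUnit (hμ.map _)).mp hTi
    exact Or.inr fun f => by rw [← hT, hT1, Module.End.one_apply]
  · have hT0 : T = 0 := hTi.eq_zero_of_isNilpotent (hμ.map _)
    exact Or.inl fun f => by rw [← hT, hT0, LinearMap.zero_apply]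

end Induced

theorem compFactors_of_image_of_indecomposable_in_same_block_general
    (k : Type) [Field k] (A : Type) [Ring A] [Algebra k A] [FiniteDimensional k A]
    (P : Type) [AddCommGroup P] [Module A P] [Module.Finite A P] [Module.Projective A P]
    (hA1 : CondA1 A P)
    (M : Type) [AddCommGroup M] [Module A M] [Module.Finite A M]
    (hMind : ∀ N₁ N₂ : Submodule A M, IsCompl N₁ N₂ → N₁ = ⊥ ∨ N₂ = ⊥) :
    (∀ (D D' : Type) [AddCommGroup D] [Module ((Module.End A P)ᵐᵒᵖ) D]
        [AddCommGroup D'] [Module ((Module.End A P)ᵐᵒᵖ) D'],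
      IsCompFactor ((Module.End A P)ᵐᵒᵖ) D (P →ₗ[A] M) →
      IsCompFactor ((Module.End A P)ᵐᵒᵖ) D' (P →ₗ[A] M) →
      InSameBlock ((Module.End A P)ᵐᵒᵖ) D D') ∧
    (∀ e : (Module.End A P)ᵐᵒᵖ, e ∈ Subring.center ((Module.End A P)ᵐᵒᵖ) →
      IsIdempotentElem e →
      (∀ f : P →ₗ[A] M, e • f = 0) ∨ (∀ f : P →ₗ[A] M, e • f = f)) := by
  have : IsArtinianRing A := IsArtinianRing.of_finite k A
  have hzero_or_id := fun (e : (Module.End A P)ᵐᵒᵖ) (he : e ∈ Subring.center _) =>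
    hA1.smul_eq_zero_or_eq_self hMind he
  refine ⟨fun D D' _ _ _ _ hD hD' => ?_, hzero_or_id⟩
  have := hD.nontrivial
  obtain ⟨e, he, heX⟩ := exists_isBlockIdempotent_forall_smul_eq_self
    (fun c => LinearMap.range c.unop) (fun _ _ => LinearMap.range_unop_lt_range_unop_add)
    hzero_or_id
  exact ⟨e, he, hD.smul_eq_self heX, hD'.smul_eq_self heX⟩

/-- under condition (A1), if `M` is a finite-dimensional indecomposable
`A`-module then all composition factors of the `B`-module `F(M)` belong to the same
block of `B`; equivalently, every central idempotent of `B` acts on `F(M)` either as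
zero or as the identity. -/
theorem compFactors_of_image_of_indecomposable_in_same_block
    (k : Type) [Field k] (A : Type) [Ring A] [Algebra k A] [FiniteDimensional k A]
    (P : Type) [AddCommGroup P] [Module A P] [Module.Finite A P] [Module.Projective A P]
    (hA1 : CondA1 A P)
    (M : Type) [AddCommGroup M] [Module A M] [Module.Finite A M]
    (hM0 : Nontrivial M)
    (hMind : ∀ N₁ N₂ : Submodule A M, IsCompl N₁ N₂ → N₁ = ⊥ ∨ N₂ = ⊥) :
    (∀ (D D' : Type) [AddCommGroup D] [Module ((Module.End A P)ᵐᵒᵖ) D]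
        [AddCommGroup D'] [Module ((Module.End A P)ᵐᵒᵖ) D'],
      IsCompFactor ((Module.End A P)ᵐᵒᵖ) D (P →ₗ[A] M) →
      IsCompFactor ((Module.End A P)ᵐᵒᵖ) D' (P →ₗ[A] M) →
      InSameBlock ((Module.End A P)ᵐᵒᵖ) D D') ∧
    (∀ e : (Module.End A P)ᵐᵒᵖ, e ∈ Subring.center ((Module.End A P)ᵐᵒᵖ) →
      IsIdempotentElem e →
      (∀ f : P →ₗ[A] M, e • f = 0) ∨ (∀ f : P →ₗ[A] M, e • f = f)) :=
  compFactors_of_image_of_indecomposable_in_same_block_general k A P hA1 M hMind
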